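/- arXiv:2501.17353 — 3 statements merged into one kernel-verified Lean document; each statement's English description precedes it below -/
import Mathlib

section
/- Let p be a prime and d a positive integer not divisible by p. Let k̄ be an algebraically closed field of characteristic p, O = k̄[[z]] with valuation ν, and let R ⊆ O be a k̄-subalgebra containing z^p and an element y with ν(y) = d, and closed under the derivation D = D_z/D_z(x_0) as in the setting where ν(D_z(x)) ≥ ν(x) − 1 with equality iff p ∤ ν(x) and D shifts valuations by at least −d with equality iff p ∤ ν. Then the value semigroup ν(R \ {0}) equals the numerical semigroup generated by d and p, i.e. d·ℤ_{≥0} + p·ℤ_{≥0}. -/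
/-- the value semigroup of a subalgebra `R ⊆ k̄[[z]]` containing `z^p` and an
element of valuation `d` (with `p ∤ d`), stable under a derivation shifting valuations by at
least `−d` with equality iff `p ∤ ν`, equals the numerical semigroup generated by `d` and `p`. -/
theorem stmt_7 (p : ℕ) (hp : p.Prime) (k : Type*) [Field k] [IsAlgClosed k] [CharP k p]
    (d : ℕ) (hd : 0 < d) (hpd : ¬ p ∣ d)
    (R : Subalgebra k (PowerSeries k))
    (hzp : (PowerSeries.X : PowerSeries k) ^ p ∈ R)
    (hy : ∃ y ∈ R, (y : PowerSeries k).order = (d : ℕ∞))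
    (D : PowerSeries k → PowerSeries k)
    (hDR : ∀ w ∈ R, D w ∈ R)
    (hDval : ∀ w ∈ R, ∀ n : ℕ, (w : PowerSeries k).order = (n : ℕ∞) →
      ((∀ m : ℕ, (D w).order = (m : ℕ∞) → (n : ℤ) - (d : ℤ) ≤ (m : ℤ)) ∧
        ((∃ m : ℕ, (D w).order = (m : ℕ∞) ∧ (m : ℤ) = (n : ℤ) - (d : ℤ)) ↔ ¬ p ∣ n))) :
    ∀ n : ℕ, (∃ x ∈ R, (x : PowerSeries k).order = (n : ℕ∞)) ↔
      ∃ a b : ℕ, n = a * d + b * p := by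
  intro n
  constructor
  · rintro ⟨x, hx, hxo⟩
    induction n using Nat.strong_induction_on generalizing x with
    | _ n ih =>
      by_cases hpn : p ∣ n
      · obtain ⟨c, hc⟩ := hpn
        exact ⟨0, c, by rw [hc]; ring⟩
      · obtain ⟨m, hm, hmd⟩ := (hDval x hx n hxo).2.mpr hpn
        obtain ⟨a, b, hab⟩ := ih m (by omega) (D x) (hDR x hx) hm
        refine ⟨a + 1, b, ?_⟩
        have hnm : n = m + d := by omega
        rw [hnm, hab]; ring
  · rintro ⟨a, b, rfl⟩
    obtain ⟨y, hyR, hyo⟩ := hy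
    have h1 : ∀ a : ℕ, ((y ^ a : PowerSeries k)).order = ((a * d : ℕ) : ℕ∞) := by
      intro a
      induction a with
      | zero => simp
      | succ a ih =>
        rw [pow_succ, PowerSeries.order_mul, ih, hyo]
        push_cast
        ring
    refine ⟨y ^ a * PowerSeries.X ^ (p * b),
      mul_mem (pow_mem hyR a) (by rw [pow_mul]; exact pow_mem hzp b), ?_⟩
    rw [PowerSeries.order_mul, h1, PowerSeries.order_X_pow]
    push_cast
    ring
end

section
/- Let p be a prime, K a field of characteristic p, and let S be a module over B = A ⊗_K K', where K'|K is a finite purely inseparable extension and A is a K-algebra, equipped with commuting operators ∇_D for D in Der_A(B) satisfying ∇_D(a·x) = D(a)·x + a·∇_D(x). Suppose s ∈ B satisfies: there is D with D(s) = 1, D^p = 0, and ∇_D^p = 0 on S. Let S₀ = ker ∇_D. Then S = ⊕_{k=0}^{p−1} s^k·S₀. -/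
section Aux

variable {p : ℕ} {S : Type*} [AddCommGroup S]

lemma aux_p_smul (B : Type*) [CommRing B] [CharP B p] [Module B S] (x : S) :
    p • x = (0 : S) := by
  rw [← Nat.cast_smul_eq_nsmul B, CharP.cast_eq_zero, zero_smul]

lemma aux_mod_smul (B : Type*) [CommRing B] [CharP B p] [Module B S] (n : ℕ) (x : S) :
    n • x = (n % p) • x := by
  conv_lhs => rw [← Nat.div_add_mod n p]
  rw [add_nsmul, mul_nsmul, aux_p_smul (p := p) B, smul_zero, zero_add]

lemma aux_cancel (B : Type*) [CommRing B] [CharP B p] [Module B S]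
    (hp : p.Prime) (n : ℕ) (hn : ¬ p ∣ n) (x : S) (h : n • x = 0) :
    x = 0 := by
  haveI := Fact.mk hp
  set m : ℕ := ((n : ZMod p)⁻¹).val with hm
  have hnz : (n : ZMod p) ≠ 0 := by
    simpa [ZMod.natCast_eq_zero_iff] using hn
  have key : (n * m) % p = 1 := by
    have h1 : ((n * m : ℕ) : ZMod p) = 1 := by
      push_cast [hm, ZMod.natCast_val, ZMod.cast_id]
      exact mul_inv_cancel₀ hnz
    have hv := congrArg ZMod.val h1
    rwa [ZMod.val_natCast, ZMod.val_one] at hv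
  calc x = 1 • x := (one_smul _ _).symm
    _ = ((n * m) % p) • x := by rw [key]
    _ = (n * m) • x := (aux_mod_smul (p := p) B _ _).symm
    _ = m • (n • x) := by rw [mul_nsmul]
    _ = 0 := by rw [h, smul_zero]

end Aux

section Main

variable {p : ℕ} {B : Type*} [CommRing B] [CharP B p]
  {S : Type*} [AddCommGroup S] [Module B S]

lemma aux_N_pow (D : Derivation ℤ B B) (s : B) (hs : D s = 1) (N : S →+ S)
    (hLeib : ∀ (a : B) (x : S), N (a • x) = D a • x + a • N x) (k : ℕ) (x : S) :
    N (s ^ k • x) = k • (s ^ (k - 1) • x) + s ^ k • N x := by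
  rw [hLeib, Derivation.leibniz_pow, hs, smul_eq_mul, mul_one, smul_assoc]

lemma aux_exist (hp : p.Prime) (D : Derivation ℤ B B) (s : B) (hs : D s = 1) (N : S →+ S)
    (hLeib : ∀ (a : B) (x : S), N (a • x) = D a • x + a • N x)
    (n : ℕ) (hn : n ≤ p) : ∀ x : S, (⇑N)^[n] x = 0 →
    ∃ c : ℕ → S, (∀ k, N (c k) = 0) ∧ x = ∑ k ∈ Finset.range n, s ^ k • c k := by
  haveI := Fact.mk hp
  induction n with
  | zero =>
    intro x hx
    refine ⟨fun _ => 0, by simp, ?_⟩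
    simpa using hx
  | succ n ih =>
    intro x hx
    obtain ⟨d, hd, hsum⟩ := ih (Nat.le_of_succ_le hn) (N x)
      (by rw [← Function.iterate_succ_apply]; exact hx)
    set m : ℕ → ℕ := fun k => (((k + 1 : ℕ) : ZMod p)⁻¹).val with hm
    have hkey : ∀ k, k < n → ∀ y : S, (k + 1) • (m k • y) = y := by
      intro k hk y
      have hnd : ¬ p ∣ (k + 1) := Nat.not_dvd_of_pos_of_lt (Nat.succ_pos k) (by omega)
      have hnz : ((k + 1 : ℕ) : ZMod p) ≠ 0 :=
        fun h => hnd ((ZMod.natCast_eq_zero_iff _ _).mp h)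
      have h1 : (((k + 1) * m k : ℕ) : ZMod p) = 1 := by
        rw [Nat.cast_mul]
        show ((k + 1 : ℕ) : ZMod p) * ((((k + 1 : ℕ) : ZMod p))⁻¹.val : ZMod p) = 1
        rw [ZMod.natCast_val, ZMod.cast_id]
        exact mul_inv_cancel₀ hnz
      have hv := congrArg ZMod.val h1
      rw [ZMod.val_natCast, ZMod.val_one] at hv
      calc (k + 1) • (m k • y) = (m k * (k + 1)) • y := (mul_nsmul y _ _).symm
        _ = ((k + 1) * m k) • y := by rw [mul_comm]
        _ = (((k + 1) * m k) % p) • y := aux_mod_smul (p := p) B _ _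
        _ = y := by rw [hv, one_smul]
    have hterm : ∀ k ∈ Finset.range n, N (s ^ (k + 1) • (m k • d k)) = s ^ k • d k := by
      intro k hk
      rw [aux_N_pow D s hs N hLeib, map_nsmul, hd, smul_zero, smul_zero, add_zero,
        Nat.add_sub_cancel, smul_comm, hkey k (Finset.mem_range.mp hk)]
    refine ⟨fun j => match j with
      | 0 => x - ∑ k ∈ Finset.range n, s ^ (k + 1) • (m k • d k)
      | (j + 1) => m j • d j, ?_, ?_⟩
    · intro k
      match k with
      | 0 =>
        show N (x - ∑ k ∈ Finset.range n, s ^ (k + 1) • (m k • d k)) = 0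
        rw [map_sub, map_sum, Finset.sum_congr rfl hterm, ← hsum, sub_self]
      | (j + 1) =>
        show N (m j • d j) = 0
        rw [map_nsmul, hd, smul_zero]
    · rw [Finset.sum_range_succ']
      show x = (∑ k ∈ Finset.range n, s ^ (k + 1) • (m k • d k)) +
        s ^ 0 • (x - ∑ k ∈ Finset.range n, s ^ (k + 1) • (m k • d k))
      rw [pow_zero, one_smul]
      abel

lemma aux_uniq (hp : p.Prime) (D : Derivation ℤ B B) (s : B) (hs : D s = 1) (N : S →+ S)
    (hLeib : ∀ (a : B) (x : S), N (a • x) = D a • x + a • N x)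
    (n : ℕ) (hn : n ≤ p) : ∀ c : ℕ → S, (∀ k, N (c k) = 0) →
    (∑ k ∈ Finset.range n, s ^ k • c k) = 0 → ∀ k < n, c k = 0 := by
  induction n with
  | zero => intro c _ _ k hk; omega
  | succ n ih =>
    intro c hc hsum
    have h0 : (∑ k ∈ Finset.range (n + 1), N (s ^ k • c k)) = 0 := by
      rw [← map_sum, hsum, map_zero]
    have hterm : ∀ k ∈ Finset.range (n + 1), N (s ^ k • c k) = k • (s ^ (k - 1) • c k) := by
      intro k _
      rw [aux_N_pow D s hs N hLeib, hc, smul_zero, add_zero]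
    rw [Finset.sum_congr rfl hterm, Finset.sum_range_succ'] at h0
    simp only [zero_nsmul, add_zero, Nat.add_sub_cancel] at h0
    have h0' : (∑ j ∈ Finset.range n, s ^ j • ((j + 1) • c (j + 1))) = 0 := by
      rw [← h0]
      exact Finset.sum_congr rfl fun j _ => (smul_comm _ _ _)
    have hz := ih (Nat.le_of_succ_le hn) (fun j => (j + 1) • c (j + 1))
      (fun j => by rw [map_nsmul, hc, smul_zero]) h0'
    have hc1 : ∀ j, j < n → c (j + 1) = 0 := by
      intro j hj
      exact aux_cancel B hp (j + 1)
        (Nat.not_dvd_of_pos_of_lt (Nat.succ_pos j) (by omega)) _ (hz j hj)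
    have hc0 : c 0 = 0 := by
      rw [Finset.sum_range_succ'] at hsum
      have hz' : ∀ k ∈ Finset.range n, s ^ (k + 1) • c (k + 1) = 0 := fun k hk => by
        rw [hc1 k (Finset.mem_range.mp hk), smul_zero]
      rwa [Finset.sum_congr rfl hz', Finset.sum_const_zero, zero_add, pow_zero,
        one_smul] at hsum
    intro k hk
    match k with
    | 0 => exact hc0
    | (j + 1) => exact hc1 j (by omega)

end Main

/-- one-variable Cartier-type decomposition: if `D s = 1`, `D^p = 0`,
`∇` satisfies the Leibniz rule over `D` and `∇^p = 0`, then every element of `S`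
decomposes uniquely as `Σ_{k<p} s^k·x_k` with `x_k ∈ ker ∇`, i.e. `S = ⊕_{k<p} s^k·S₀`. -/
theorem stmt_17 (p : ℕ) (hp : p.Prime) (B : Type*) [CommRing B] [CharP B p]
    (S : Type*) [AddCommGroup S] [Module B S]
    (D : Derivation ℤ B B) (s : B) (hs : D s = 1)
    (hDp : ∀ b : B, (⇑D)^[p] b = 0)
    (N : S →+ S)
    (hLeib : ∀ (a : B) (x : S), N (a • x) = D a • x + a • N x)
    (hNp : ∀ x : S, (⇑N)^[p] x = 0) :
    ∀ x : S, ∃! c : Fin p → S, (∀ k, N (c k) = 0) ∧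
      x = ∑ k : Fin p, s ^ (k : ℕ) • c k := by
  intro x
  obtain ⟨c, hc, hx⟩ := aux_exist hp D s hs N hLeib p le_rfl x (hNp x)
  refine ⟨fun k => c k, ⟨fun k => hc _, ?_⟩, ?_⟩
  · rw [Fin.sum_univ_eq_sum_range (fun i => s ^ i • c i) p]
    exact hx
  · rintro c' ⟨hc', hx'⟩
    set e : ℕ → S := fun j => if h : j < p then c' ⟨j, h⟩ - c j else 0 with he
    have heN : ∀ j, N (e j) = 0 := by
      intro j
      by_cases h : j < p
      · simp only [he, dif_pos h, map_sub, hc' ⟨j, h⟩, hc j, sub_zero]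
      · simp [he, dif_neg h]
    have hesum : (∑ j ∈ Finset.range p, s ^ j • e j) = 0 := by
      rw [← Fin.sum_univ_eq_sum_range (fun j => s ^ j • e j) p]
      have h1 : ∀ k : Fin p, s ^ (k : ℕ) • e k
          = s ^ (k : ℕ) • c' k - s ^ (k : ℕ) • c k := by
        intro k
        simp only [he, dif_pos k.isLt, Fin.eta, smul_sub]
      rw [Finset.sum_congr rfl fun k _ => h1 k, Finset.sum_sub_distrib, ← hx']
      rw [← Fin.sum_univ_eq_sum_range (fun i => s ^ i • c i) p] at hx
      rw [← hx, sub_self]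
    have hez := aux_uniq hp D s hs N hLeib p le_rfl e heN hesum
    funext k
    have hk := hez (k : ℕ) k.isLt
    simp only [he, dif_pos k.isLt, Fin.eta] at hk
    exact sub_eq_zero.mp hk
end

section
/- Let p be a prime, B a commutative ring of characteristic p, D a derivation of B, and s ∈ B with D(s) = 1. Let S be a B-module with an operator ∇ satisfying ∇(ax) = D(a)x + a∇(x), and let x ∈ ker ∇. Then for 0 ≤ k ≤ p−1: ∇^{p−1}(s^k x) = 0 if k < p−1, and ∇^{p−1}(s^{p−1} x) = (p−1)!·x = −x. -/
lemma aux_iter_nsmul {B : Type*} [CommRing B] (D : Derivation ℤ B B)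
    (n c : ℕ) (y : B) : (⇑D)^[n] (c • y) = c • (⇑D)^[n] y := by
  induction n generalizing y with
  | zero => simp
  | succ n ih =>
    rw [Function.iterate_succ_apply, Function.iterate_succ_apply, map_nsmul, ih]

lemma aux_desc {B : Type*} [CommRing B] (D : Derivation ℤ B B)
    (s : B) (hs : D s = 1) (n k : ℕ) :
    (⇑D)^[n] (s ^ k) = (Nat.descFactorial k n : B) * s ^ (k - n) := by
  induction n generalizing k with
  | zero => simp
  | succ n ih =>
    cases k with
    | zero =>
      rw [pow_zero, Function.iterate_succ_apply, Derivation.map_one_eq_zero,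
        Function.iterate_fixed (map_zero D)]
      simp
    | succ m =>
      rw [Function.iterate_succ_apply, Derivation.leibniz_pow, hs, smul_eq_mul,
        mul_one, Nat.succ_sub_one, aux_iter_nsmul, ih]
      have : m + 1 - (n + 1) = m - n := by omega
      rw [this, Nat.succ_descFactorial_succ]
      push_cast
      ring

/-- for `x ∈ ker ∇`, `∇^{p−1}(s^k x) = 0` for `k < p−1` and
`∇^{p−1}(s^{p−1} x) = (p−1)!·x = −x`. -/
theorem stmt_18 (p : ℕ) (hp : p.Prime) (B : Type*) [CommRing B] [CharP B p]
    (S : Type*) [AddCommGroup S] [Module B S]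
    (D : Derivation ℤ B B) (s : B) (hs : D s = 1)
    (N : S →+ S)
    (hLeib : ∀ (a : B) (x : S), N (a • x) = D a • x + a • N x)
    (x : S) (hx : N x = 0) :
    (∀ k : ℕ, k < p - 1 → (⇑N)^[p - 1] (s ^ k • x) = 0) ∧
      (⇑N)^[p - 1] (s ^ (p - 1) • x) = ((p - 1).factorial : B) • x ∧
      ((p - 1).factorial : B) • x = -x := by
  have key : ∀ (n : ℕ) (a : B), (⇑N)^[n] (a • x) = (⇑D)^[n] a • x := by
    intro n
    induction n with
    | zero => intro a; rfl
    | succ n ih =>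
      intro a
      rw [Function.iterate_succ_apply, hLeib, hx, smul_zero, add_zero, ih,
        Function.iterate_succ_apply]
  refine ⟨?_, ?_, ?_⟩
  · intro k hk
    rw [key, aux_desc D s hs]
    rw [Nat.descFactorial_eq_zero_iff_lt.mpr hk]
    simp
  · rw [key, aux_desc D s hs, Nat.sub_self, pow_zero, mul_one,
      Nat.descFactorial_self]
  · haveI : Fact p.Prime := ⟨hp⟩
    have h : ((p - 1).factorial : B) = -1 := by
      calc ((p - 1).factorial : B)
          = (ZMod.castHom (dvd_refl p) B) ((p - 1).factorial : ZMod p) :=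
            (map_natCast _ _).symm
        _ = (ZMod.castHom (dvd_refl p) B) (-1) := by rw [ZMod.wilsons_lemma]
        _ = -1 := by rw [map_neg, map_one]
    rw [h, neg_one_smul]
end
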